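/- Define $\mathcal{R}_m(x)=x/m^2$ for $m\in\mathbb{N}$, and let $\mathcal{Z}_m:\mathbb{R}\to[0,\infty)$ be the error function of the inverse optimization spectral problem for the $m$-th eigenvalue (as defined piecewise via $\mathbb{U}_i,\mathbb{V}_i$). Then, in the special case $p=2$, the dilation relation $\mathcal{Z}_1(\mathcal{R}_m(x))=\mathcal{R}_m(\mathcal{Z}_m(x))$ holds for $x>m^2\pi^2$, that is, $\mathcal{Z}_1(x/m^2)=\mathcal{Z}_m(x)/m^2$ for all $x>m^2\pi^2$. -/

import Mathlib

open Real

noncomputable def Vfun (x α : ℝ) : ℝ :=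
  ∫ t in (0:ℝ)..1, 1 / Real.sqrt ((1 - t ^ 2) - α ^ 2 / (2 * x) * (1 - t ^ 4))

noncomputable def Ufun (x α : ℝ) : ℝ :=
  ∫ t in (0:ℝ)..1,
    (α ^ 4 / x ^ 2 * t ^ 4) / Real.sqrt ((1 - t ^ 2) - α ^ 2 / (2 * x) * (1 - t ^ 4))

section auxZ
open Real MeasureTheory Set intervalIntegral

noncomputable def Wfun (c : ℝ) : ℝ :=
  ∫ t in (0:ℝ)..1, 1 / Real.sqrt ((1 - t ^ 2) - c * (1 - t ^ 4))

noncomputable def UUfun (c : ℝ) : ℝ :=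
  ∫ t in (0:ℝ)..1, (4 * c ^ 2 * t ^ 4) / Real.sqrt ((1 - t ^ 2) - c * (1 - t ^ 4))

lemma meas_den (c : ℝ) : Measurable fun t : ℝ => Real.sqrt ((1 - t ^ 2) - c * (1 - t ^ 4)) := by
  fun_prop

-- key splitting/substitution lemma
lemma key {g f : ℝ → ℝ} {k : ℝ} (hgm : Measurable g) (hk0 : 0 < k) (hk1 : k ≤ 1)
    (hzero : ∀ t ∈ Set.Icc k 1, g t = 0)
    (heq : ∀ s ∈ Set.Icc (0:ℝ) 1, k * g (k * s) = f s) :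
    (∫ t in (0:ℝ)..1, g t) = ∫ s in (0:ℝ)..1, f s := by
  have hsplit : (∫ t in (0:ℝ)..1, g t) = ∫ t in (0:ℝ)..k, g t := by
    by_cases h : IntervalIntegrable g volume 0 k
    · have hzero' : Set.EqOn g 0 (Set.uIcc k 1) := by
        rw [Set.uIcc_of_le hk1]; intro t ht; exact hzero t ht
      have h2 : IntervalIntegrable g volume k 1 := by
        refine (_root_.intervalIntegrable_const (c := (0:ℝ))).mono_fun
          hgm.aestronglyMeasurable.restrict ?_
        filter_upwards [MeasureTheory.ae_restrict_mem measurableSet_uIoc] with t ht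
        rw [hzero' (Set.uIoc_subset_uIcc ht)]
        simp
      have hadd := intervalIntegral.integral_add_adjacent_intervals h h2
      have h20 : (∫ t in k..(1:ℝ), g t) = 0 := by
        rw [intervalIntegral.integral_congr hzero']
        simp
      rw [← hadd, h20, add_zero]
    · have h01 : ¬ IntervalIntegrable g volume 0 1 := by
        intro H
        exact h (H.mono_set (by
          rw [Set.uIcc_of_le hk0.le, Set.uIcc_of_le (by norm_num : (0:ℝ) ≤ 1)]
          exact Set.Icc_subset_Icc le_rfl hk1))
      rw [intervalIntegral.integral_undef h, intervalIntegral.integral_undef h01]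
  rw [hsplit]
  have hcomp := intervalIntegral.smul_integral_comp_mul_left g k (a := 0) (b := 1)
  simp only [mul_zero, mul_one, smul_eq_mul] at hcomp
  rw [← hcomp, ← intervalIntegral.integral_const_mul]
  apply intervalIntegral.integral_congr
  intro s hs
  rw [Set.uIcc_of_le (by norm_num : (0:ℝ) ≤ 1)] at hs
  exact heq s hs

-- pointwise division identity
lemma kdiv {c q k B : ℝ} (hc : 0 < c) (hq : 0 < q) (hk : k = Real.sqrt (c/q)) (hB : 0 ≤ B) :
    k / Real.sqrt (c * B) = 1 / Real.sqrt (q * B) := by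
  have hsq : Real.sqrt q ≠ 0 := by positivity
  have hk0 : k ≠ 0 := by
    have : 0 < c / q := div_pos hc hq
    rw [hk]; positivity
  have hkq : k * Real.sqrt q = Real.sqrt c := by
    rw [hk, Real.sqrt_div hc.le, div_mul_cancel₀ _ hsq]
  have h1 : Real.sqrt (c * B) = k * (Real.sqrt q * Real.sqrt B) := by
    rw [Real.sqrt_mul hc.le, ← hkq]; ring
  rw [h1, Real.sqrt_mul hq.le]
  rcases eq_or_ne (Real.sqrt q * Real.sqrt B) 0 with h | h
  · rw [h, mul_zero, div_zero, div_zero]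
  · field_simp

lemma aux_zero {q k t : ℝ} (hq : 0 < q) (hk0 : 0 < k) (hk2 : q * k ^ 2 + q = 1)
    (ht : t ∈ Set.Icc k 1) : (1 - t ^ 2) - q * (1 - t ^ 4) ≤ 0 := by
  have ht2 : k ^ 2 ≤ t ^ 2 := by nlinarith [ht.1, ht.2]
  have h5 : 1 ≤ q * (1 + t ^ 2) := by nlinarith
  nlinarith [mul_nonneg (sub_nonneg.2 h5) (by nlinarith [ht.1, ht.2, hk0] : (0:ℝ) ≤ 1 - t ^ 2)]

lemma aux_B {k s : ℝ} (hk1 : k ≤ 1) (hk0 : 0 ≤ k) (hs : s ∈ Set.Icc (0:ℝ) 1) :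
    0 ≤ (1 - s ^ 2) * (1 - k ^ 2 * s ^ 2) := by
  have h1' : s ^ 2 ≤ 1 := by nlinarith [hs.1, hs.2]
  have h2' : k ^ 2 * s ^ 2 ≤ 1 := by nlinarith [sq_nonneg k, sq_nonneg s]
  nlinarith

lemma W_symm {c : ℝ} (h0 : 0 < c) (h1 : c < 1/2) : Wfun (1 - c) = Wfun c := by
  set q : ℝ := 1 - c with hqdef
  have hq : 0 < q := by simp only [hqdef]; linarith
  set k : ℝ := Real.sqrt (c / q) with hkdef
  have hk0 : 0 < k := Real.sqrt_pos.2 (div_pos h0 hq)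
  have hk2 : q * k ^ 2 = c := by
    rw [hkdef, Real.sq_sqrt (div_pos h0 hq).le, mul_div_cancel₀ _ hq.ne']
  have hk1 : k ≤ 1 := by
    rw [hkdef]
    exact Real.sqrt_le_one.mpr (by rw [div_le_one hq]; linarith)
  refine key (g := fun t => 1 / Real.sqrt ((1 - t ^ 2) - q * (1 - t ^ 4)))
    (f := fun t => 1 / Real.sqrt ((1 - t ^ 2) - c * (1 - t ^ 4))) ?_ hk0 hk1 ?_ ?_
  · fun_prop
  · intro t ht
    have harg := aux_zero hq hk0 (by linarith) ht
    simp only [Real.sqrt_eq_zero_of_nonpos harg, div_zero]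
  · intro s hs
    have hB := aux_B hk1 hk0.le hs
    have e1 : (1 - (k * s) ^ 2) - q * (1 - (k * s) ^ 4)
        = c * ((1 - s ^ 2) * (1 - k ^ 2 * s ^ 2)) := by
      linear_combination (k ^ 2 * s ^ 4 - s ^ 2) * hk2
        + (-(k ^ 2) * (k ^ 2 * s ^ 4 - s ^ 2) - (1 - k ^ 4 * s ^ 4)) * hqdef
    have e2 : (1 - s ^ 2) - c * (1 - s ^ 4)
        = q * ((1 - s ^ 2) * (1 - k ^ 2 * s ^ 2)) := by
      linear_combination ((1 - s ^ 2) * s ^ 2) * hk2 + (-(1 - s ^ 2)) * hqdef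
    rw [e1, e2, mul_one_div]
    exact kdiv h0 hq hkdef hB

lemma UU_symm {c : ℝ} (h0 : 0 < c) (h1 : c < 1/2) : UUfun (1 - c) = UUfun c := by
  set q : ℝ := 1 - c with hqdef
  have hq : 0 < q := by simp only [hqdef]; linarith
  set k : ℝ := Real.sqrt (c / q) with hkdef
  have hk0 : 0 < k := Real.sqrt_pos.2 (div_pos h0 hq)
  have hk2 : q * k ^ 2 = c := by
    rw [hkdef, Real.sq_sqrt (div_pos h0 hq).le, mul_div_cancel₀ _ hq.ne']
  have hk1 : k ≤ 1 := by
    rw [hkdef]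
    exact Real.sqrt_le_one.mpr (by rw [div_le_one hq]; linarith)
  refine key (g := fun t => (4 * q ^ 2 * t ^ 4) / Real.sqrt ((1 - t ^ 2) - q * (1 - t ^ 4)))
    (f := fun t => (4 * c ^ 2 * t ^ 4) / Real.sqrt ((1 - t ^ 2) - c * (1 - t ^ 4)))
    ?_ hk0 hk1 ?_ ?_
  · fun_prop
  · intro t ht
    have harg := aux_zero hq hk0 (by linarith) ht
    simp only [Real.sqrt_eq_zero_of_nonpos harg, div_zero]
  · intro s hs
    have hB := aux_B hk1 hk0.le hs
    have e1 : (1 - (k * s) ^ 2) - q * (1 - (k * s) ^ 4)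
        = c * ((1 - s ^ 2) * (1 - k ^ 2 * s ^ 2)) := by
      linear_combination (k ^ 2 * s ^ 4 - s ^ 2) * hk2
        + (-(k ^ 2) * (k ^ 2 * s ^ 4 - s ^ 2) - (1 - k ^ 4 * s ^ 4)) * hqdef
    have e2 : (1 - s ^ 2) - c * (1 - s ^ 4)
        = q * ((1 - s ^ 2) * (1 - k ^ 2 * s ^ 2)) := by
      linear_combination ((1 - s ^ 2) * s ^ 2) * hk2 + (-(1 - s ^ 2)) * hqdef
    rw [e1, e2]
    have hkd := kdiv h0 hq hkdef hB
    have hnum : 4 * q ^ 2 * (k * s) ^ 4 = (4 * c ^ 2 * s ^ 4) := by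
      linear_combination (4 * s ^ 4 * (q * k ^ 2 + c)) * hk2
    calc k * (4 * q ^ 2 * (k * s) ^ 4 / Real.sqrt (c * ((1 - s ^ 2) * (1 - k ^ 2 * s ^ 2))))
        = (4 * q ^ 2 * (k * s) ^ 4) * (k / Real.sqrt (c * ((1 - s ^ 2) * (1 - k ^ 2 * s ^ 2)))) := by
          ring
      _ = (4 * q ^ 2 * (k * s) ^ 4) * (1 / Real.sqrt (q * ((1 - s ^ 2) * (1 - k ^ 2 * s ^ 2)))) := by
          rw [hkd]
      _ = (4 * c ^ 2 * s ^ 4) / Real.sqrt (q * ((1 - s ^ 2) * (1 - k ^ 2 * s ^ 2))) := by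
          rw [← hnum]; ring

lemma integrable_f {c : ℝ} (h0 : 0 ≤ c) (h1 : c < 1/2) :
    IntervalIntegrable (fun t => 1 / Real.sqrt ((1 - t ^ 2) - c * (1 - t ^ 4))) volume 0 1 := by
  have hrp : IntervalIntegrable (fun t : ℝ => t ^ (-(1/2) : ℝ)) volume 0 1 :=
    intervalIntegrable_rpow' (by norm_num)
  have hrefl : IntervalIntegrable (fun t : ℝ => (1 - t) ^ (-(1/2) : ℝ)) volume 0 1 := by
    have := (hrp.comp_sub_left 1).symm
    simpa using this
  have hg : IntervalIntegrable
      (fun t : ℝ => (Real.sqrt (1 - 2*c))⁻¹ * (1 - t) ^ (-(1/2) : ℝ)) volume 0 1 :=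
    hrefl.const_mul _
  refine hg.mono_fun ((measurable_const.div (meas_den c)).aestronglyMeasurable.restrict) ?_
  rw [Set.uIoc_of_le (by norm_num : (0:ℝ) ≤ 1)]
  filter_upwards [MeasureTheory.ae_restrict_mem measurableSet_Ioc] with t ht
  have ht0 : 0 < t := ht.1
  have ht1 : t ≤ 1 := ht.2
  have harg : (1 - 2*c) * (1 - t) ≤ (1 - t ^ 2) - c * (1 - t ^ 4) := by
    have e : ((1 - t ^ 2) - c * (1 - t ^ 4)) - (1 - 2*c) * (1 - t)
        = (1-t)*((1-2*c)*t) + c*(1+t)*(1-t^2)*(1-t) := by ring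
    have p1 : 0 ≤ (1-t)*((1-2*c)*t) :=
      mul_nonneg (by linarith) (mul_nonneg (by linarith) ht0.le)
    have p2 : 0 ≤ c*(1+t)*(1-t^2)*(1-t) := by
      exact mul_nonneg (mul_nonneg (mul_nonneg h0 (by linarith)) (by nlinarith)) (by linarith)
    linarith
  have hargnn : 0 ≤ (1 - 2*c) * (1 - t) := by nlinarith
  have hfnn : 0 ≤ 1 / Real.sqrt ((1 - t ^ 2) - c * (1 - t ^ 4)) := by positivity
  have hrw : (Real.sqrt (1 - 2*c))⁻¹ * (1 - t) ^ (-(1/2) : ℝ)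
      = (Real.sqrt ((1 - 2*c) * (1 - t)))⁻¹ := by
    rw [Real.rpow_neg (by linarith), ← Real.sqrt_eq_rpow, Real.sqrt_mul (by linarith), mul_inv]
  have hgnn : 0 ≤ (Real.sqrt ((1 - 2*c) * (1 - t)))⁻¹ := by positivity
  rw [Real.norm_eq_abs, Real.norm_eq_abs, abs_of_nonneg hfnn, hrw,
    abs_of_nonneg hgnn]
  rcases eq_or_lt_of_le ht1 with rfl | ht1'
  · norm_num
  · have hB' : 0 < (1 - 2*c) * (1 - t) := by nlinarith
    have hsB' : 0 < Real.sqrt ((1 - 2*c) * (1 - t)) := Real.sqrt_pos.2 hB'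
    rw [← one_div]
    exact one_div_le_one_div_of_le hsB' (Real.sqrt_le_sqrt harg)

lemma W_mono {c c' : ℝ} (h0 : 0 ≤ c) (hlt : c < c') (h1 : c' < 1/2) : Wfun c < Wfun c' := by
  have hc := integrable_f h0 (lt_trans hlt h1)
  have hc' := integrable_f (le_trans h0 hlt.le) h1
  have hpos : 0 < ∫ t in (0:ℝ)..1,
      (1 / Real.sqrt ((1 - t ^ 2) - c' * (1 - t ^ 4))
        - 1 / Real.sqrt ((1 - t ^ 2) - c * (1 - t ^ 4))) := by
    refine intervalIntegral.intervalIntegral_pos_of_pos_on (hc'.sub hc) ?_ (by norm_num)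
    intro t ht
    have ht0 := ht.1
    have ht1 := ht.2
    have h0' : 0 ≤ c' := le_trans h0 hlt.le
    have ht2 : t ^ 2 < 1 := by nlinarith
    have ht4 : t ^ 4 < 1 := by nlinarith [sq_nonneg t, sq_nonneg (t^2)]
    have harg' : 0 < (1 - t ^ 2) - c' * (1 - t ^ 4) := by
      have e : (1 - t ^ 2) - c' * (1 - t ^ 4) = (1 - t^2) * (1 - c' * (1 + t^2)) := by ring
      rw [e]
      apply mul_pos (by linarith)
      have : c' * (1 + t^2) < 1 := by nlinarith
      linarith
    have hlt2 : (1 - t ^ 2) - c' * (1 - t ^ 4) < (1 - t ^ 2) - c * (1 - t ^ 4) := by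
      have := mul_lt_mul_of_pos_right hlt (by linarith : (0:ℝ) < 1 - t^4)
      nlinarith
    have := Real.sqrt_lt_sqrt harg'.le hlt2
    have hs' : 0 < Real.sqrt ((1 - t ^ 2) - c' * (1 - t ^ 4)) := Real.sqrt_pos.2 harg'
    have := one_div_lt_one_div_of_lt hs' this
    linarith
  rw [intervalIntegral.integral_sub hc' hc] at hpos
  unfold Wfun
  linarith

lemma W_ge_one {c : ℝ} (h : 1 ≤ c) : Wfun c = 0 := by
  unfold Wfun
  rw [intervalIntegral.integral_congr (g := fun _ => (0:ℝ)) ?_, intervalIntegral.integral_zero]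
  intro t ht
  rw [Set.uIcc_of_le (by norm_num : (0:ℝ) ≤ 1)] at ht
  have h1 : (1 - t ^ 2) - c * (1 - t ^ 4) ≤ 0 := by
    nlinarith [mul_nonneg (by nlinarith [ht.1, ht.2] : (0:ℝ) ≤ 1 - t ^ 2)
      (by nlinarith [sq_nonneg t] : (0:ℝ) ≤ c * (1 + t ^ 2) - 1)]
  simp only [Real.sqrt_eq_zero_of_nonpos h1, div_zero]

lemma W_half : Wfun (1/2) = 0 := by
  unfold Wfun
  apply intervalIntegral.integral_undef
  intro h
  have h2 : IntervalIntegrable (fun t => 1 / Real.sqrt ((1 - t ^ 2) - 1/2 * (1 - t ^ 4)))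
      volume (1/2) 1 := by
    refine h.mono_set ?_
    rw [Set.uIcc_of_le (by norm_num : (1/2:ℝ) ≤ 1), Set.uIcc_of_le (by norm_num : (0:ℝ) ≤ 1)]
    exact Set.Icc_subset_Icc (by norm_num) le_rfl
  have h3 : IntervalIntegrable (fun x : ℝ => (2 * (x - 1))⁻¹) volume (1/2) 1 := by
    refine h2.mono_fun
      (((measurable_id.sub measurable_const).const_mul 2).inv.aestronglyMeasurable.restrict) ?_
    rw [Set.uIoc_of_le (by norm_num : (1/2:ℝ) ≤ 1)]
    filter_upwards [MeasureTheory.ae_restrict_mem measurableSet_Ioc] with x hx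
    have hx0 : 1/2 < x := hx.1
    have hx1 : x ≤ 1 := hx.2
    have he : (1 - x ^ 2) - 1/2 * (1 - x ^ 4) = (1 - x^2)^2 / 2 := by ring
    have hs : Real.sqrt ((1 - x ^ 2) - 1/2 * (1 - x ^ 4)) = (1 - x^2) / Real.sqrt 2 := by
      rw [he, show (1 - x^2)^2 / 2 = ((1-x^2)/Real.sqrt 2)^2 by
        rw [div_pow, Real.sq_sqrt (by norm_num : (0:ℝ) ≤ 2)],
        Real.sqrt_sq (div_nonneg (by nlinarith) (Real.sqrt_nonneg 2))]
    rcases eq_or_lt_of_le hx1 with rfl | hx1'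
    · simp
    · have hpos : 0 < 1 - x^2 := by nlinarith
      have hxm : 0 < 2 * (1 - x) := by linarith
      rw [Real.norm_eq_abs, Real.norm_eq_abs, hs,
        abs_of_nonneg (by positivity : (0:ℝ) ≤ 1 / ((1 - x^2)/Real.sqrt 2)),
        abs_of_nonpos (by
          apply inv_nonpos.2
          nlinarith : (2 * (x - 1))⁻¹ ≤ 0)]
      have hneg : -(2 * (x - 1))⁻¹ = (2 * (1 - x))⁻¹ := by
        rw [← inv_neg]; ring_nf
      rw [hneg, one_div_div]
      rw [inv_eq_one_div, div_le_div_iff₀ hxm (by positivity)]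
      have hsqrt2 : (1:ℝ) ≤ Real.sqrt 2 := by
        nlinarith [Real.sq_sqrt (by norm_num : (0:ℝ) ≤ 2), Real.sqrt_nonneg 2]
      nlinarith
  have h4 : IntervalIntegrable (fun x : ℝ => (x - 1)⁻¹) volume (1/2) 1 := by
    have h5 := h3.const_mul 2
    have heq : (fun x : ℝ => 2 * (2 * (x - 1))⁻¹) = fun x : ℝ => (x - 1)⁻¹ := by
      funext x
      rw [mul_inv]
      ring
    rwa [heq] at h5
  rw [intervalIntegrable_sub_inv_iff] at h4
  rcases h4 with h4 | h4
  · norm_num at h4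
  · exact h4 (Set.right_mem_uIcc)

lemma main_inj {d d' v : ℝ} (hd : 0 < d) (hd' : 0 < d') (hv : 0 < v)
    (h1 : Wfun d = v) (h2 : Wfun d' = v) : UUfun d = UUfun d' := by
  have norm : ∀ e : ℝ, 0 < e → Wfun e = v →
      ∃ e', 0 < e' ∧ e' < 1/2 ∧ Wfun e' = v ∧ UUfun e' = UUfun e := by
    intro e he hWe
    have he1 : e < 1 := by
      by_contra hge
      rw [W_ge_one (by linarith)] at hWe
      linarith
    have hne : e ≠ 1/2 := by
      intro h
      rw [h, W_half] at hWe
      linarith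
    rcases lt_or_gt_of_ne hne with hlt | hgt
    · exact ⟨e, he, hlt, hWe, rfl⟩
    · refine ⟨1 - e, by linarith, by linarith, ?_, ?_⟩
      · have := W_symm (c := 1 - e) (by linarith) (by linarith)
        rw [show (1:ℝ) - (1 - e) = e by ring] at this
        rw [← this]
        exact hWe
      · have := UU_symm (c := 1 - e) (by linarith) (by linarith)
        rw [show (1:ℝ) - (1 - e) = e by ring] at this
        exact this.symm
  obtain ⟨e, he0, he2, hWe, hUe⟩ := norm d hd h1
  obtain ⟨e', he0', he2', hWe', hUe'⟩ := norm d' hd' h2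
  have : e = e' := by
    rcases lt_trichotomy e e' with h | h | h
    · have := W_mono he0.le h he2'
      rw [hWe, hWe'] at this; linarith
    · exact h
    · have := W_mono he0'.le h he2
      rw [hWe, hWe'] at this; linarith
  rw [← hUe, ← hUe', this]

lemma Vfun_eq_W (x α : ℝ) : Vfun x α = Wfun (α ^ 2 / (2 * x)) := rfl

lemma Ufun_eq_UU (x α : ℝ) : Ufun x α = UUfun (α ^ 2 / (2 * x)) := by
  unfold Ufun UUfun
  apply intervalIntegral.integral_congr
  intro t _
  simp only []
  rw [show α ^ 4 / x ^ 2 = 4 * (α ^ 2 / (2 * x)) ^ 2 by ring]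

lemma UU_nonneg (c : ℝ) : 0 ≤ UUfun c := by
  unfold UUfun
  apply intervalIntegral.integral_nonneg (by norm_num)
  intro t _
  positivity

end auxZ

theorem stmt_15 (m : ℕ) (hm : 1 ≤ m) (x : ℝ) (hx : (m:ℝ) ^ 2 * π ^ 2 < x)
    (α1 αm : ℝ) (hα1 : 0 < α1) (hαm : 0 < αm)
    (h1 : Vfun (x / (m:ℝ) ^ 2) α1 = Real.sqrt (x / (m:ℝ) ^ 2) / (2 * 1))
    (hm' : Vfun x αm = Real.sqrt x / (2 * m)) :
    Real.sqrt (2 * 1 * (x / (m:ℝ) ^ 2) ^ ((3:ℝ) / 2) * Ufun (x / (m:ℝ) ^ 2) α1)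
      = Real.sqrt (2 * m * x ^ ((3:ℝ) / 2) * Ufun x αm) / (m:ℝ) ^ 2 := by
  have hm0 : (0:ℝ) < m := by exact_mod_cast Nat.pos_of_ne_zero (by omega)
  have hm1 : (1:ℝ) ≤ m := by exact_mod_cast hm
  have hx0 : (0:ℝ) < x := lt_of_le_of_lt (by positivity) hx
  have hxm : (0:ℝ) < x / (m:ℝ) ^ 2 := by positivity
  set d : ℝ := α1 ^ 2 / (2 * (x / (m:ℝ) ^ 2)) with hddef
  set d' : ℝ := αm ^ 2 / (2 * x) with hd'def
  have hd : 0 < d := by rw [hddef]; positivity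
  have hd' : 0 < d' := by rw [hd'def]; positivity
  have hv : 0 < Real.sqrt x / (2 * m) := by
    have := Real.sqrt_pos.2 hx0
    positivity
  have hsq : Real.sqrt (x / (m:ℝ) ^ 2) = Real.sqrt x / (m:ℝ) := by
    rw [Real.sqrt_div hx0.le, Real.sqrt_sq hm0.le]
  have hW1 : Wfun d = Real.sqrt x / (2 * m) := by
    rw [← Vfun_eq_W, h1, hsq]
    rw [div_div]
    ring_nf
  have hW2 : Wfun d' = Real.sqrt x / (2 * m) := by
    rw [← Vfun_eq_W]; exact hm'
  have hUU := main_inj hd hd' hv hW1 hW2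
  rw [Ufun_eq_UU, Ufun_eq_UU, ← hddef, ← hd'def, hUU]
  have hU0 := UU_nonneg d'
  have hpow : ((m:ℝ) ^ 2) ^ ((3:ℝ)/2) = (m:ℝ) ^ 3 := by
    rw [← Real.rpow_natCast (m:ℝ) 2, ← Real.rpow_mul hm0.le]
    norm_num
  have hdivpow : (x / (m:ℝ) ^ 2) ^ ((3:ℝ)/2) = x ^ ((3:ℝ)/2) / (m:ℝ) ^ 3 := by
    rw [Real.div_rpow hx0.le (by positivity), hpow]
  have hxp : 0 ≤ x ^ ((3:ℝ)/2) := Real.rpow_nonneg hx0.le _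
  have harg : 2 * (m:ℝ) * x ^ ((3:ℝ)/2) * UUfun d'
      = ((m:ℝ) ^ 2) ^ 2 * (2 * 1 * (x / (m:ℝ) ^ 2) ^ ((3:ℝ)/2) * UUfun d') := by
    rw [hdivpow]
    field_simp
  conv_rhs => rw [harg, Real.sqrt_mul (sq_nonneg ((m:ℝ) ^ 2)), Real.sqrt_sq (sq_nonneg (m:ℝ))]
  rw [mul_div_cancel_left₀ _ (by positivity : ((m:ℝ) ^ 2) ≠ 0)]
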